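/- arXiv:1903.11576 — 5 statements merged into one kernel-verified Lean document; each statement's English description precedes it below -/
import Mathlib

section
/- Let H : ℝ^n → ℝ be differentiable with L-Lipschitz gradient, f : ℝ^n → ℝ convex, and t > 0 with t ≤ 1/L. Let A be a point, T a linear subspace, and D the minimizer over T of the strongly convex function D ↦ ⟨∇H(A), D⟩ + (1/(2t))‖D‖² + f(A + D). Then for all α ∈ [0,1], H(A + αD) + f(A + αD) ≤ H(A) + f(A) − (α/(2t))‖D‖². -/
/-!
The descent lemma bounds `H (A + α • D)` by its linearization at `A` plus `L / 2 * ‖α • D‖ ^ 2`,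
and convexity bounds `f (A + α • D)` by the chord through `f A` and `f (A + D)`. What remains is
the first-order optimality of `D`: comparing `D` with `β • D ∈ T` and using convexity of `f` once
more gives `⟪∇H A, D⟫ + f (A + D) - f A ≤ -(1 + β) / (2 * t) * ‖D‖ ^ 2` for every `β < 1`, hence
`≤ -‖D‖ ^ 2 / t` in the limit. Since `L * t ≤ 1`, the quadratic term `L / 2 * α ^ 2 * ‖D‖ ^ 2`
eats at most half of the resulting decrease.
-/

open RealInnerProductSpace Set Filter Topology

theorem ConvexOn.apply_add_smul_le {E : Type*} [AddCommGroup E] [Module ℝ E] {f : E → ℝ}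
    (hf : ConvexOn ℝ univ f) (x d : E) {β : ℝ} (hβ₀ : 0 ≤ β) (hβ₁ : β ≤ 1) :
    f (x + β • d) ≤ (1 - β) * f x + β * f (x + d) := by
  have h := hf.2 (mem_univ x) (mem_univ (x + d)) (sub_nonneg.2 hβ₁) hβ₀ (by ring)
  rwa [show (1 - β) • x + β • (x + d) = x + β • d by module] at h

section InnerProductSpace

variable {E : Type*} [NormedAddCommGroup E] [InnerProductSpace ℝ E]

theorem HasGradientAt.hasDerivAt_comp_add_smul [CompleteSpace E] {H : E → ℝ} {g x d : E}
    {τ : ℝ} (hH : HasGradientAt H g (x + τ • d)) :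
    HasDerivAt (fun s : ℝ => H (x + s • d)) ⟪g, d⟫ τ := by
  have hline : HasDerivAt (fun s : ℝ => x + s • d) d τ := by
    simpa using ((hasDerivAt_id τ).smul_const d).const_add x
  simpa [InnerProductSpace.toDual_apply_apply, Function.comp_def] using
    hH.hasFDerivAt.comp_hasDerivAt τ hline

theorem apply_add_le_of_lipschitz_gradient [CompleteSpace E] {H : E → ℝ} {gradH : E → E}
    (hH : ∀ x, HasGradientAt H (gradH x) x) {L : ℝ}
    (hLip : ∀ x y, ‖gradH x - gradH y‖ ≤ L * ‖x - y‖) (x d : E) :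
    H (x + d) ≤ H x + ⟪gradH x, d⟫ + L / 2 * ‖d‖ ^ 2 := by
  have hline (τ : ℝ) := (hH (x + τ • d)).hasDerivAt_comp_add_smul
  have hmodel (τ : ℝ) :
      HasDerivAt (fun s : ℝ => H x + s * ⟪gradH x, d⟫ + L / 2 * s ^ 2 * ‖d‖ ^ 2)
        (⟪gradH x, d⟫ + L * τ * ‖d‖ ^ 2) τ := by
    refine ((((hasDerivAt_id' τ).mul_const ⟪gradH x, d⟫).const_add (H x)).add
      (((hasDerivAt_pow 2 τ).const_mul (L / 2)).mul_const (‖d‖ ^ 2))).congr_deriv ?_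
    push_cast
    ring
  have hderiv_le (τ : ℝ) (hτ : 0 ≤ τ) :
      ⟪gradH (x + τ • d), d⟫ ≤ ⟪gradH x, d⟫ + L * τ * ‖d‖ ^ 2 := by
    have hlip : ‖gradH (x + τ • d) - gradH x‖ ≤ L * (τ * ‖d‖) := by
      simpa [norm_smul, abs_of_nonneg hτ] using hLip (x + τ • d) x
    have hcs := real_inner_le_norm (gradH (x + τ • d) - gradH x) d
    rw [inner_sub_left] at hcs
    nlinarith [mul_le_mul_of_nonneg_right hlip (norm_nonneg d)]
  simpa using image_le_of_deriv_right_le_deriv_boundary (a := 0) (b := 1)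
    (fun τ _ => (hline τ).continuousAt.continuousWithinAt)
    (fun τ _ => (hline τ).hasDerivWithinAt) (by simp)
    (fun τ _ => (hmodel τ).continuousAt.continuousWithinAt)
    (fun τ _ => (hmodel τ).hasDerivWithinAt) (fun τ hτ => hderiv_le τ hτ.1)
    (right_mem_Icc.2 zero_le_one)

theorem inner_add_apply_le_sub_of_minimizes_on_submodule {f : E → ℝ} (hf : ConvexOn ℝ univ f)
    (g A : E) (c : ℝ) {T : Submodule ℝ E} {D : E} (hDT : D ∈ T)
    (hmin : ∀ D' ∈ T, ⟪g, D⟫ + c * ‖D‖ ^ 2 + f (A + D) ≤ ⟪g, D'⟫ + c * ‖D'‖ ^ 2 + f (A + D')) :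
    ⟪g, D⟫ + f (A + D) ≤ f A - 2 * c * ‖D‖ ^ 2 := by
  have hβ : ∀ β ∈ Ico (0 : ℝ) 1, ⟪g, D⟫ + f (A + D) ≤ f A - (1 + β) * c * ‖D‖ ^ 2 := by
    rintro β ⟨hβ₀, hβ₁⟩
    have hm := hmin (β • D) (T.smul_mem β hDT)
    rw [real_inner_smul_right, norm_smul, Real.norm_eq_abs, mul_pow, sq_abs] at hm
    have hconv := hf.apply_add_smul_le A D hβ₀ hβ₁.le
    -- `hm + hconv` is this inequality; the factor `1 - β` is why `β = 1` must be reached as a limit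
    have h : (1 - β) * (⟪g, D⟫ + f (A + D)) ≤ (1 - β) * (f A - (1 + β) * c * ‖D‖ ^ 2) := by
      nlinarith
    exact le_of_mul_le_mul_left h (sub_pos.2 hβ₁)
  have hlim : Tendsto (fun β : ℝ => f A - (1 + β) * c * ‖D‖ ^ 2) (𝓝[<] 1)
      (𝓝 (f A - (1 + 1) * c * ‖D‖ ^ 2)) :=
    (Continuous.tendsto (by fun_prop) 1).mono_left nhdsWithin_le_nhds
  have h := ge_of_tendsto hlim <| by
    filter_upwards [Ioo_mem_nhdsLT (zero_lt_one' ℝ)] with β hβ01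
    exact hβ β (Ioo_subset_Ico_self hβ01)
  linarith

end InnerProductSpace

theorem half_mul_sq_mul_le_div_mul {L t α c : ℝ} (ht : 0 < t) (htL : t ≤ 1 / L)
    (hα₀ : 0 ≤ α) (hα₁ : α ≤ 1) (hc : 0 ≤ c) : L / 2 * (α ^ 2 * c) ≤ α / (2 * t) * c := by
  have hLt : L * t ≤ 1 := by
    rcases le_or_gt L 0 with hL | hL
    · nlinarith
    · rwa [le_div_iff₀ hL, mul_comm] at htL
  have hfactor : α / (2 * t) * c - L / 2 * (α ^ 2 * c) = α * c / (2 * t) * (1 - L * t * α) := by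
    field_simp
  have hnonneg : 0 ≤ α * c / (2 * t) * (1 - L * t * α) :=
    mul_nonneg (by positivity) (by nlinarith)
  linarith

theorem stmt_1_general {n : ℕ} (H f : EuclideanSpace ℝ (Fin n) → ℝ)
    (gradH : EuclideanSpace ℝ (Fin n) → EuclideanSpace ℝ (Fin n))
    (hH : ∀ x, HasGradientAt H (gradH x) x)
    (L : ℝ)
    (hLip : ∀ x y, ‖gradH x - gradH y‖ ≤ L * ‖x - y‖)
    (hf : ConvexOn ℝ Set.univ f)
    (t : ℝ) (ht : 0 < t) (htL : t ≤ 1 / L)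
    (A : EuclideanSpace ℝ (Fin n))
    (T : Submodule ℝ (EuclideanSpace ℝ (Fin n)))
    (D : EuclideanSpace ℝ (Fin n)) (hDT : D ∈ T)
    (hmin : ∀ D' ∈ T,
      (inner ℝ (gradH A) (D) : ℝ) + 1 / (2 * t) * ‖D‖ ^ 2 + f (A + D) ≤
        (inner ℝ (gradH A) (D') : ℝ) + 1 / (2 * t) * ‖D'‖ ^ 2 + f (A + D')) :
    ∀ α : ℝ, α ∈ Set.Icc (0 : ℝ) 1 →
      H (A + α • D) + f (A + α • D) ≤ H A + f A - α / (2 * t) * ‖D‖ ^ 2 := by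
  rintro α ⟨hα₀, hα₁⟩
  have hdescent := apply_add_le_of_lipschitz_gradient hH hLip A (α • D)
  rw [real_inner_smul_right, norm_smul, Real.norm_eq_abs, mul_pow, sq_abs] at hdescent
  have hconv := hf.apply_add_smul_le A D hα₀ hα₁
  have hopt := inner_add_apply_le_sub_of_minimizes_on_submodule hf (gradH A) A _ hDT hmin
  have hquadratic := half_mul_sq_mul_le_div_mul ht htL hα₀ hα₁ (sq_nonneg ‖D‖)
  calc H (A + α • D) + f (A + α • D)
      ≤ H A + α * ⟪gradH A, D⟫ + L / 2 * (α ^ 2 * ‖D‖ ^ 2) + ((1 - α) * f A + α * f (A + D)) :=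
        add_le_add hdescent hconv
    _ = H A + f A + α * (⟪gradH A, D⟫ + f (A + D) - f A) + L / 2 * (α ^ 2 * ‖D‖ ^ 2) := by ring
    _ ≤ H A + f A + α * (-(2 * (1 / (2 * t))) * ‖D‖ ^ 2) + α / (2 * t) * ‖D‖ ^ 2 :=
        add_le_add (add_le_add le_rfl (mul_le_mul_of_nonneg_left (by linarith) hα₀)) hquadratic
    _ = H A + f A - α / (2 * t) * ‖D‖ ^ 2 := by ring

theorem stmt_1 {n : ℕ} (H f : EuclideanSpace ℝ (Fin n) → ℝ)
    (gradH : EuclideanSpace ℝ (Fin n) → EuclideanSpace ℝ (Fin n))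
    (hH : ∀ x, HasGradientAt H (gradH x) x)
    (L : ℝ) (hL : 0 < L)
    (hLip : ∀ x y, ‖gradH x - gradH y‖ ≤ L * ‖x - y‖)
    (hf : ConvexOn ℝ Set.univ f)
    (t : ℝ) (ht : 0 < t) (htL : t ≤ 1 / L)
    (A : EuclideanSpace ℝ (Fin n))
    (T : Submodule ℝ (EuclideanSpace ℝ (Fin n)))
    (D : EuclideanSpace ℝ (Fin n)) (hDT : D ∈ T)
    (hmin : ∀ D' ∈ T,
      (inner ℝ (gradH A) (D) : ℝ) + 1 / (2 * t) * ‖D‖ ^ 2 + f (A + D) ≤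
        (inner ℝ (gradH A) (D') : ℝ) + 1 / (2 * t) * ‖D'‖ ^ 2 + f (A + D')) :
    ∀ α : ℝ, α ∈ Set.Icc (0 : ℝ) 1 →
      H (A + α • D) + f (A + α • D) ≤ H A + f A - α / (2 * t) * ‖D‖ ^ 2 :=
  stmt_1_general H f gradH hH L hLip hf t ht htL A T D hDT hmin
end

section
/- With the notation of the previous lemma, the minimizer D of ⟨∇H(A), D⟩ + (1/(2t))‖D‖² + f(A+D) over the subspace T satisfies ⟨∇H(A), D⟩ + (1/t)‖D‖² + f(A+D) − f(A) ≤ 0. -/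
/-!
Put `g D' = ⟪∇H(A), D'⟫ + f (A + D')`, a convex function. Minimality of `D` against `α • D`,
together with `g (α • D) ≤ α g D + (1 - α) g 0`, gives after cancelling `1 - α`
`g D - g 0 ≤ -(1 + α) ‖D‖² / (2t)` for every `α ∈ [0, 1)`; letting `α → 1` yields the claim.
-/

open RealInnerProductSpace

section

variable {E : Type*} [SeminormedAddCommGroup E] [NormedSpace ℝ E] {s : Set E} {g : E → ℝ}
  {c : ℝ} {D : E}

theorem ConvexOn.sub_le_of_le_smul (hg : ConvexOn ℝ s g) (h0 : 0 ∈ s) (hD : D ∈ s) {α : ℝ}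
    (hα₀ : 0 ≤ α) (hα₁ : α < 1) (h : g D + c * ‖D‖ ^ 2 ≤ g (α • D) + c * ‖α • D‖ ^ 2) :
    g D - g 0 ≤ -(c * (1 + α) * ‖D‖ ^ 2) := by
  have hconv : g (α • D) ≤ α * g D + (1 - α) * g 0 := by
    simpa using hg.2 hD h0 hα₀ (by linarith) (by ring)
  rw [norm_smul, Real.norm_eq_abs, abs_of_nonneg hα₀] at h
  have hscaled : (1 - α) * (g D - g 0) ≤ (1 - α) * -(c * (1 + α) * ‖D‖ ^ 2) := by nlinarith
  exact le_of_mul_le_mul_left hscaled (by linarith)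

open Filter Topology in
theorem ConvexOn.add_two_mul_sq_norm_le_of_forall_le_smul (hg : ConvexOn ℝ s g) (h0 : 0 ∈ s)
    (hD : D ∈ s)
    (h : ∀ α ∈ Set.Ico (0 : ℝ) 1, g D + c * ‖D‖ ^ 2 ≤ g (α • D) + c * ‖α • D‖ ^ 2) :
    g D + 2 * c * ‖D‖ ^ 2 ≤ g 0 := by
  have hlim : Tendsto (fun α : ℝ => -(c * (1 + α) * ‖D‖ ^ 2)) (𝓝[<] 1)
      (𝓝 (-(c * (1 + 1) * ‖D‖ ^ 2))) :=
    (Continuous.tendsto (by fun_prop) 1).mono_left nhdsWithin_le_nhds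
  have hbound : ∀ᶠ α in 𝓝[<] (1 : ℝ), g D - g 0 ≤ -(c * (1 + α) * ‖D‖ ^ 2) := by
    filter_upwards [Ioo_mem_nhdsLT zero_lt_one] with α hα
    exact hg.sub_le_of_le_smul h0 hD hα.1.le hα.2 (h α ⟨hα.1.le, hα.2⟩)
  linarith [ge_of_tendsto hlim hbound]

end

theorem stmt_2_general {n : ℕ} (f : EuclideanSpace ℝ (Fin n) → ℝ)
    (gradH : EuclideanSpace ℝ (Fin n) → EuclideanSpace ℝ (Fin n))
    (hf : ConvexOn ℝ Set.univ f)
    (t : ℝ)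
    (A : EuclideanSpace ℝ (Fin n))
    (T : Submodule ℝ (EuclideanSpace ℝ (Fin n)))
    (D : EuclideanSpace ℝ (Fin n)) (hDT : D ∈ T)
    (hmin : ∀ D' ∈ T,
      (inner ℝ (gradH A) (D) : ℝ) + 1 / (2 * t) * ‖D‖ ^ 2 + f (A + D) ≤
        (inner ℝ (gradH A) (D') : ℝ) + 1 / (2 * t) * ‖D'‖ ^ 2 + f (A + D')) :
    (inner ℝ (gradH A) (D) : ℝ) + 1 / t * ‖D‖ ^ 2 + f (A + D) - f A ≤ 0 := by
  set g : EuclideanSpace ℝ (Fin n) → ℝ := fun D' => ⟪gradH A, D'⟫ + f (A + D')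
  have hg : ConvexOn ℝ Set.univ g :=
    ((innerₛₗ ℝ (gradH A)).convexOn convex_univ).add (hf.translate_right A)
  have key := hg.add_two_mul_sq_norm_le_of_forall_le_smul (c := 1 / (2 * t)) trivial trivial
    fun α _ => by simpa only [g, add_right_comm] using hmin (α • D) (T.smul_mem α hDT)
  have hc : 2 * (1 / (2 * t)) = 1 / t := by ring
  simp only [g, hc, inner_zero_right, add_zero] at key
  linarith

theorem stmt_2 {n : ℕ} (H f : EuclideanSpace ℝ (Fin n) → ℝ)
    (gradH : EuclideanSpace ℝ (Fin n) → EuclideanSpace ℝ (Fin n))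
    (hH : ∀ x, HasGradientAt H (gradH x) x)
    (hf : ConvexOn ℝ Set.univ f)
    (t : ℝ) (ht : 0 < t)
    (A : EuclideanSpace ℝ (Fin n))
    (T : Submodule ℝ (EuclideanSpace ℝ (Fin n)))
    (D : EuclideanSpace ℝ (Fin n)) (hDT : D ∈ T)
    (hmin : ∀ D' ∈ T,
      (inner ℝ (gradH A) (D) : ℝ) + 1 / (2 * t) * ‖D‖ ^ 2 + f (A + D) ≤
        (inner ℝ (gradH A) (D') : ℝ) + 1 / (2 * t) * ‖D'‖ ^ 2 + f (A + D')) :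
    (inner ℝ (gradH A) (D) : ℝ) + 1 / t * ‖D‖ ^ 2 + f (A + D) - f A ≤ 0 :=
  stmt_2_general f gradH hf t A T D hDT hmin
end

section
/- For the polar retraction R_X(ξ) = (X + ξ)(I_r + ξᵀξ)^{-1/2} on the Stiefel manifold, R_X(0) = X, and for every tangent vector ξ at X one has ‖R_X(ξ) − (X + ξ)‖_F ≤ ‖ξ‖_F² (a second-order retraction bound with constant M₂ = 1). -/
/-!
Write `Y = X + ξ` and `A = ξᵀξ ⪰ 0`. Tangency gives `YᵀY = I + A`, and the square root of
`(I + A)⁻¹` is `g(A)` with `g(σ) = (1 + σ)^(-1/2)`. The error `E = Y g(A) - Y = Y (g(A) - I)`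
therefore satisfies `EᵀE = h(A)` with `h(σ) = (g(σ) - 1)² (1 + σ) = (√(1 + σ) - 1)² ≤ σ²`, so over
the eigenvalues `σᵢ ≥ 0` of `A`, `‖E‖_F² = ∑ h(σᵢ) ≤ ∑ σᵢ² ≤ (∑ σᵢ)² = ‖ξ‖_F⁴`.
-/

open Matrix

/-- Frobenius norm of a real matrix. -/
noncomputable def frobNorm {p r : ℕ} (M : Matrix (Fin p) (Fin r) ℝ) : ℝ :=
  Real.sqrt (∑ i, ∑ j, (M i j) ^ 2)

/-- The positive semidefinite square root of a positive semidefinite matrix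
(removed from Mathlib; restored with its December 2024 definition). -/
noncomputable def Matrix.PosSemidef.sqrt {n 𝕜 : Type*} [Fintype n] [RCLike 𝕜] [PartialOrder 𝕜] [StarOrderedRing 𝕜]
    [DecidableEq n]
    {A : Matrix n n 𝕜} (hA : A.PosSemidef) : Matrix n n 𝕜 :=
  hA.1.eigenvectorUnitary.1 * diagonal ((↑) ∘ (√·) ∘ hA.1.eigenvalues) *
    (star hA.1.eigenvectorUnitary : Matrix n n 𝕜)

open scoped MatrixOrder ComplexOrder

namespace Matrix

lemma transpose_mul_self_add_tangent {m n R : Type*} [Fintype m] [DecidableEq n] [CommRing R]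
    {X ξ : Matrix m n R} (hX : Xᵀ * X = 1) (hξ : ξᵀ * X + Xᵀ * ξ = 0) :
    (X + ξ)ᵀ * (X + ξ) = 1 + ξᵀ * ξ := by
  rw [transpose_add, Matrix.add_mul, Matrix.mul_add, Matrix.mul_add, hX,
    eq_neg_of_add_eq_zero_left hξ]
  abel

variable {n : Type*} [Fintype n] [DecidableEq n]

lemma PosSemidef.sqrt_eq_cfc {𝕜 : Type*} [RCLike 𝕜] {B : Matrix n n 𝕜} (hB : B.PosSemidef) :
    hB.sqrt = cfc Real.sqrt B := by
  rw [hB.1.cfc_eq]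
  simp [IsHermitian.cfc, PosSemidef.sqrt, Unitary.conjStarAlgAut_apply]

lemma PosSemidef.eq_sqrt_of_sq_eq {𝕜 : Type*} [RCLike 𝕜] {B C : Matrix n n 𝕜}
    (hC : C.PosSemidef) (hB : B.PosSemidef) (h : C ^ 2 = B) : C = hB.sqrt := by
  rw [hB.sqrt_eq_cfc, ← cfcₙ_eq_cfc, ← CFC.sqrt_eq_real_sqrt B hB.nonneg]
  exact (CFC.sqrt_unique (by rw [← h, sq]) hC.nonneg).symm

lemma IsHermitian.trace_cfc {A : Matrix n n ℝ} (hA : A.IsHermitian) (f : ℝ → ℝ) :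
    (cfc f A).trace = ∑ i, f (hA.eigenvalues i) := by
  rw [hA.cfc_eq, IsHermitian.cfc, Unitary.conjStarAlgAut_apply, trace_mul_cycle,
    Unitary.coe_star_mul_self, one_mul, trace_diagonal]
  rfl

lemma PosSemidef.sqrt_inv_one_add {A : Matrix n n ℝ} (hA : A.PosSemidef) (hP : ((1 + A)⁻¹).PosSemidef) :
    hP.sqrt = cfc (fun x => (√(1 + x))⁻¹) A := by
  have hc (f : ℝ → ℝ) : ContinuousOn f (spectrum ℝ A) := A.finite_real_spectrum.continuousOn f
  refine (PosSemidef.eq_sqrt_of_sq_eq ?_ hP ?_).symm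
  · exact (cfc_nonneg fun x _ => by positivity).posSemidef
  · refine (inv_eq_left_inv ?_).symm
    have hspec : ∀ x ∈ spectrum ℝ A, 0 ≤ x := fun _ hx => spectrum_nonneg_of_nonneg hA.nonneg hx
    calc cfc (fun x => (√(1 + x))⁻¹) A ^ 2 * (1 + A)
        = cfc (fun x => (√(1 + x))⁻¹ ^ 2 * (1 + x)) A := by
          rw [cfc_mul _ _ A (hc _) (hc _), cfc_pow _ 2 A (hc _), cfc_const_add 1 _ A (hc _),
            cfc_id' ℝ A, map_one]
      _ = cfc (fun _ => 1) A := cfc_congr fun x hx => by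
          have := hspec x hx
          rw [inv_pow, Real.sq_sqrt (by linarith), inv_mul_cancel₀ (by linarith)]
      _ = 1 := cfc_const_one ℝ A

lemma transpose_mul_self_mul_cfc_sub {m : Type*} [Fintype m] {Y : Matrix m n ℝ}
    {A : Matrix n n ℝ} (hY : Yᵀ * Y = 1 + A) (f : ℝ → ℝ) :
    (Y * cfc f A - Y)ᵀ * (Y * cfc f A - Y) = cfc (fun x => (f x - 1) ^ 2 * (1 + x)) A := by
  have hc (f : ℝ → ℝ) : ContinuousOn f (spectrum ℝ A) := A.finite_real_spectrum.continuousOn f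
  have hA : IsSelfAdjoint A := by
    rw [← add_sub_cancel_left 1 A, ← hY]
    have hYY : (Yᵀ * Y).IsHermitian := by
      simpa only [conjTranspose_eq_transpose_of_trivial] using isHermitian_conjTranspose_mul_self Y
    exact hYY.isSelfAdjoint.sub (.one _)
  have hsymm : (cfc f A - 1)ᵀ = cfc f A - 1 :=
    (isHermitian_iff_isSymm.mp ((cfc_predicate f A).sub (.one _))).eq
  have hfactor : Y * cfc f A - Y = Y * (cfc f A - 1) := by rw [Matrix.mul_sub, Matrix.mul_one]
  calc (Y * cfc f A - Y)ᵀ * (Y * cfc f A - Y)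
      = (cfc f A - 1) * ((1 + A) * (cfc f A - 1)) := by
        rw [hfactor, transpose_mul, hsymm, Matrix.mul_assoc, ← Matrix.mul_assoc Yᵀ, hY]
    _ = cfc (fun x => (f x - 1) * ((1 + x) * (f x - 1))) A := by
        rw [cfc_mul _ _ A (hc _) (hc _), cfc_mul _ _ A (hc _) (hc _),
          cfc_sub f (fun _ => 1) A (hc _) (hc _), cfc_const_add 1 _ A (hc _), cfc_id' ℝ A, map_one,
          cfc_const_one ℝ A]
    _ = cfc (fun x => (f x - 1) ^ 2 * (1 + x)) A := by
        congr 1; ext x; ring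

end Matrix

lemma frobNorm_eq_sqrt_trace {p r : ℕ} (M : Matrix (Fin p) (Fin r) ℝ) :
    frobNorm M = √(Mᵀ * M).trace := by
  rw [frobNorm, Finset.sum_comm]
  simp [Matrix.trace, Matrix.mul_apply, pow_two]

lemma sq_inv_sqrt_one_add_sub_one_mul_le {x : ℝ} (hx : 0 ≤ x) :
    ((√(1 + x))⁻¹ - 1) ^ 2 * (1 + x) ≤ x ^ 2 := by
  have hs : √(1 + x) ^ 2 = 1 + x := Real.sq_sqrt (by linarith)
  have hs1 : 1 ≤ √(1 + x) := Real.one_le_sqrt.mpr (by linarith)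
  set s := √(1 + x)
  have hsq : (s⁻¹ - 1) ^ 2 * (1 + x) = (s - 1) ^ 2 := by
    rw [← hs]; field_simp; ring
  rw [hsq]
  nlinarith

lemma frobNorm_mul_cfc_inv_sqrt_sub_le {p r : ℕ} {Y : Matrix (Fin p) (Fin r) ℝ}
    {A : Matrix (Fin r) (Fin r) ℝ} (hA : A.PosSemidef) (hY : Yᵀ * Y = 1 + A) :
    frobNorm (Y * cfc (fun x => (√(1 + x))⁻¹) A - Y) ≤ A.trace := by
  have hd := hA.eigenvalues_nonneg
  have htr : A.trace = ∑ i, hA.1.eigenvalues i := by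
    simpa using hA.1.trace_eq_sum_eigenvalues
  rw [frobNorm_eq_sqrt_trace, Matrix.transpose_mul_self_mul_cfc_sub hY, hA.1.trace_cfc, htr,
    Real.sqrt_le_left (Finset.sum_nonneg fun i _ => hd i)]
  calc ∑ i, ((√(1 + hA.1.eigenvalues i))⁻¹ - 1) ^ 2 * (1 + hA.1.eigenvalues i)
      ≤ ∑ i, hA.1.eigenvalues i ^ 2 :=
        Finset.sum_le_sum fun i _ => sq_inv_sqrt_one_add_sub_one_mul_le (hd i)
    _ ≤ (∑ i, hA.1.eigenvalues i) ^ 2 := Finset.sum_sq_le_sq_sum_of_nonneg fun i _ => hd i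

theorem stmt_6 (p r : ℕ) (X ξ : Matrix (Fin p) (Fin r) ℝ)
    (hX : Xᵀ * X = 1) (hξ : ξᵀ * X + Xᵀ * ξ = 0)
    (hP : ((1 + ξᵀ * ξ)⁻¹).PosSemidef) :
    (ξ = 0 → (X + ξ) * hP.sqrt = X) ∧
      frobNorm ((X + ξ) * hP.sqrt - (X + ξ)) ≤ (frobNorm ξ) ^ 2 := by
  have hA : (ξᵀ * ξ).PosSemidef := by
    simpa using Matrix.posSemidef_conjTranspose_mul_self ξ
  rw [hA.sqrt_inv_one_add hP]
  refine ⟨fun hξ0 => ?_, ?_⟩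
  · subst hξ0
    simp [cfc_apply_zero]
  · rw [frobNorm_eq_sqrt_trace ξ, Real.sq_sqrt hA.trace_nonneg]
    exact frobNorm_mul_cfc_inv_sqrt_sub_le hA (Matrix.transpose_mul_self_add_tangent hX hξ)
end

section
/- The map E(Λ) = D(Λ)ᵀ M A + Aᵀ M D(Λ), where D(Λ) = prox_{tf}(A − t∇h(A) + 2tMAΛ) − A, is monotone on symmetric matrices: ⟨E(Λ₁) − E(Λ₂), Λ₁ − Λ₂⟩ ≥ 0 for all symmetric Λ₁, Λ₂ ∈ ℝ^{r×r}. -/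
/-!
Writing `B(Λ) = A - t∇h(A) + 2tMAΛ`, the difference `E(Λ₁) - E(Λ₂)` pairs with the symmetric
`Δ = Λ₁ - Λ₂` as `2⟨prox B(Λ₁) - prox B(Λ₂), MAΔ⟩`, using the symmetry of `M` and `Δ` under the
trace. Since `B(Λ₁) - B(Λ₂) = 2tMAΔ` with `t > 0`, this is a positive multiple of
`⟨prox B(Λ₁) - prox B(Λ₂), B(Λ₁) - B(Λ₂)⟩`, which is nonnegative because a proximal map is
monotone.
-/

open Matrix

section Frobenius

variable {m n : Type*} [Fintype m] [Fintype n]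

theorem Matrix.sum_sum_mul_eq_trace_mul_transpose {R : Type*} [NonUnitalNonAssocSemiring R]
    (X Y : Matrix m n R) : ∑ i, ∑ j, X i j * Y i j = trace (X * Yᵀ) := by
  simp [trace, mul_apply]

def Matrix.IsProximalMap (g : Matrix m n ℝ → ℝ) (P : Matrix m n ℝ → Matrix m n ℝ) : Prop :=
  ∀ B Z, (1 / 2) * (∑ i, ∑ j, (P B i j - B i j) ^ 2) + g (P B) ≤
    (1 / 2) * (∑ i, ∑ j, (Z i j - B i j) ^ 2) + g Z

/-- Adding the minimality of `P B₁` against `P B₂` to that of `P B₂` against `P B₁` cancels `g`. -/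
theorem Matrix.IsProximalMap.sum_sum_mul_sub_nonneg {g : Matrix m n ℝ → ℝ}
    {P : Matrix m n ℝ → Matrix m n ℝ} (hP : IsProximalMap g P) (B₁ B₂ : Matrix m n ℝ) :
    0 ≤ ∑ i, ∑ j, (P B₁ - P B₂) i j * (B₁ - B₂) i j := by
  have h₁ := hP B₁ (P B₂)
  have h₂ := hP B₂ (P B₁)
  have hsum : ∑ i, ∑ j, (P B₁ - P B₂) i j * (B₁ - B₂) i j =
      (1 / 2) * ((∑ i, ∑ j, (P B₂ i j - B₁ i j) ^ 2) + (∑ i, ∑ j, (P B₁ i j - B₂ i j) ^ 2)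
        - (∑ i, ∑ j, (P B₁ i j - B₁ i j) ^ 2) - (∑ i, ∑ j, (P B₂ i j - B₂ i j) ^ 2)) := by
    simp only [Finset.mul_sum, ← Finset.sum_add_distrib, ← Finset.sum_sub_distrib]
    exact Finset.sum_congr rfl fun i _ => Finset.sum_congr rfl fun j _ => by
      simp only [sub_apply]; ring
  linarith

end Frobenius

theorem Matrix.trace_transpose_mul_add_mul_mul_transpose {p r R : Type*} [Fintype p] [Fintype r]
    [CommRing R] {M : Matrix p p R} {Δ : Matrix r r R} (hM : Mᵀ = M) (hΔ : Δᵀ = Δ)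
    (A X : Matrix p r R) :
    trace ((Xᵀ * M * A + Aᵀ * M * X) * Δᵀ) = 2 * trace (X * (M * A * Δ)ᵀ) := by
  have hsymm : trace (Xᵀ * M * A * Δ) = trace (Aᵀ * M * X * Δ) := by
    rw [← trace_transpose, transpose_mul, transpose_mul, transpose_mul, transpose_transpose, hM,
      hΔ, trace_mul_comm]
    simp only [Matrix.mul_assoc]
  have hcycle : trace (Aᵀ * M * X * Δ) = trace (X * (M * A * Δ)ᵀ) := by
    rw [transpose_mul, transpose_mul, hM, hΔ, Matrix.mul_assoc, trace_mul_comm, Matrix.mul_assoc,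
      trace_mul_comm]
  rw [hΔ, Matrix.add_mul, trace_add, hsymm, hcycle, two_mul]

theorem stmt_14_general (p r : ℕ) (f : Matrix (Fin p) (Fin r) ℝ → ℝ)
    (t : ℝ) (ht : 0 < t)
    (M : Matrix (Fin p) (Fin p) ℝ) (hM : Mᵀ = M)
    (A gradhA : Matrix (Fin p) (Fin r) ℝ)
    (prox : Matrix (Fin p) (Fin r) ℝ → Matrix (Fin p) (Fin r) ℝ)
    (hprox : ∀ B Z, (1 / 2) * (∑ j, ∑ i, (prox B j i - B j i) ^ 2) + t * f (prox B) ≤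
      (1 / 2) * (∑ j, ∑ i, (Z j i - B j i) ^ 2) + t * f Z) :
    ∀ Λ₁ Λ₂ : Matrix (Fin r) (Fin r) ℝ, Λ₁ᵀ = Λ₁ → Λ₂ᵀ = Λ₂ →
      let D := fun Λ : Matrix (Fin r) (Fin r) ℝ =>
        prox (A - t • gradhA + (2 * t) • (M * A * Λ)) - A
      let E := fun Λ : Matrix (Fin r) (Fin r) ℝ => (D Λ)ᵀ * M * A + Aᵀ * M * (D Λ)
      0 ≤ ∑ a, ∑ b, (E Λ₁ - E Λ₂) a b * (Λ₁ - Λ₂) a b := by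
  intro Λ₁ Λ₂ hΛ₁ hΛ₂ D E
  set B : Matrix (Fin r) (Fin r) ℝ → Matrix (Fin p) (Fin r) ℝ :=
    fun Λ => A - t • gradhA + (2 * t) • (M * A * Λ)
  have hΔ : (Λ₁ - Λ₂)ᵀ = Λ₁ - Λ₂ := by rw [transpose_sub, hΛ₁, hΛ₂]
  have hB : B Λ₁ - B Λ₂ = (2 * t) • (M * A * (Λ₁ - Λ₂)) := by
    simp only [B, Matrix.mul_sub, smul_sub]; abel
  have hE : E Λ₁ - E Λ₂ =
      (prox (B Λ₁) - prox (B Λ₂))ᵀ * M * A + Aᵀ * M * (prox (B Λ₁) - prox (B Λ₂)) := by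
    simp only [E, D, B, transpose_sub, Matrix.sub_mul, Matrix.mul_sub]; abel
  have hmono := IsProximalMap.sum_sum_mul_sub_nonneg (g := fun Z => t * f Z) hprox (B Λ₁) (B Λ₂)
  rw [sum_sum_mul_eq_trace_mul_transpose, hB, transpose_smul, Matrix.mul_smul, trace_smul,
    smul_eq_mul, mul_nonneg_iff_of_pos_left (by positivity)] at hmono
  rw [sum_sum_mul_eq_trace_mul_transpose, hE, trace_transpose_mul_add_mul_mul_transpose hM hΔ]
  exact mul_nonneg zero_le_two hmono

theorem stmt_14 (p r : ℕ) (f : Matrix (Fin p) (Fin r) ℝ → ℝ)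
    (hf : ConvexOn ℝ Set.univ f) (t : ℝ) (ht : 0 < t)
    (M : Matrix (Fin p) (Fin p) ℝ) (hM : Mᵀ = M)
    (A gradhA : Matrix (Fin p) (Fin r) ℝ)
    (prox : Matrix (Fin p) (Fin r) ℝ → Matrix (Fin p) (Fin r) ℝ)
    (hprox : ∀ B Z, (1 / 2) * (∑ j, ∑ i, (prox B j i - B j i) ^ 2) + t * f (prox B) ≤
      (1 / 2) * (∑ j, ∑ i, (Z j i - B j i) ^ 2) + t * f Z) :
    ∀ Λ₁ Λ₂ : Matrix (Fin r) (Fin r) ℝ, Λ₁ᵀ = Λ₁ → Λ₂ᵀ = Λ₂ →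
      let D := fun Λ : Matrix (Fin r) (Fin r) ℝ =>
        prox (A - t • gradhA + (2 * t) • (M * A * Λ)) - A
      let E := fun Λ : Matrix (Fin r) (Fin r) ℝ => (D Λ)ᵀ * M * A + Aᵀ * M * (D Λ)
      0 ≤ ∑ a, ∑ b, (E Λ₁ - E Λ₂) a b * (Λ₁ - Λ₂) a b :=
  stmt_14_general p r f t ht M hM A gradhA prox hprox
end

section
/- Let h be differentiable with L-Lipschitz gradient on ℝ^n, f convex and L_f-Lipschitz, M a compact submanifold with retraction R satisfying ‖R_X(ξ) − X‖ ≤ M₁‖ξ‖ and ‖R_X(ξ) − (X+ξ)‖ ≤ M₂‖ξ‖², and suppose ‖∇h(X)‖ ≤ G_b on M. If D ∈ T_X M satisfies ⟨∇h(X), D⟩ + (1/t)‖D‖² + f(X+D) − f(X) ≤ 0, then for X⁺ = R_X(αD) with α ∈ (0,1]: h(X⁺) + f(X⁺) − h(X) − f(X) ≤ ((M₂G_b + L M₁²/2 + L_f M₂)α² − α/t)‖D‖². -/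
/-!
Split the objective change into the smooth and the nonsmooth part. For `h`, the descent lemma
bounds `h(X⁺) - h(X)` by `⟪∇h(X), X⁺ - X⟫ + (L/2)‖X⁺ - X‖²`; writing
`X⁺ - X = αD + (X⁺ - (X + αD))`, the second-order retraction bound makes everything except
`α⟪∇h(X), D⟫` of order `α²‖D‖²`. For `f`, Lipschitz continuity compares `f(X⁺)` with
`f(X + αD)` at cost `L_f M₂ α²‖D‖²`, and convexity gives
`f(X + αD) - f(X) ≤ α(f(X + D) - f(X))`. Adding `α` times the hypothesis on `D` turns the
first-order terms into `-(α/t)‖D‖²`.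
-/

open Set

theorem ConvexOn.apply_add_smul_sub_le {E : Type*} [AddCommGroup E] [Module ℝ E]
    {s : Set E} {f : E → ℝ} (hf : ConvexOn ℝ s f) {x d : E} (hx : x ∈ s) (hxd : x + d ∈ s)
    {α : ℝ} (hα₀ : 0 ≤ α) (hα₁ : α ≤ 1) :
    f (x + α • d) - f x ≤ α * (f (x + d) - f x) := by
  have hcomb : (1 - α) • x + α • (x + d) = x + α • d := by module
  have := hf.2 hx hxd (sub_nonneg.2 hα₁) hα₀ (sub_add_cancel 1 α)
  rw [hcomb, smul_eq_mul, smul_eq_mul] at this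
  linarith

section Descent

variable {E : Type*} [NormedAddCommGroup E] [InnerProductSpace ℝ E] [CompleteSpace E]

theorem le_add_inner_add_of_lipschitz_gradient {h : E → ℝ} {g : E → E}
    (hgrad : ∀ x, HasGradientAt h (g x) x) {L : ℝ}
    (hLip : ∀ x y, ‖g x - g y‖ ≤ L * ‖x - y‖)
    (x y : E) : h y ≤ h x + inner ℝ (g x) (y - x) + L / 2 * ‖y - x‖ ^ 2 := by
  set v := y - x
  let φ : ℝ → ℝ := fun s ↦
    h (x + s • v) - s * inner ℝ (g x) v - L / 2 * s ^ 2 * ‖v‖ ^ 2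
  have hφ : ∀ s, HasDerivAt φ
      (inner ℝ (g (x + s • v)) v - inner ℝ (g x) v - L * s * ‖v‖ ^ 2) s := by
    intro s
    have hline : HasDerivAt (fun s : ℝ ↦ x + s • v) v s := by
      simpa using ((hasDerivAt_id s).smul_const v).const_add x
    have hh : HasDerivAt (fun s : ℝ ↦ h (x + s • v)) (inner ℝ (g (x + s • v)) v) s :=
      ((hgrad _).hasFDerivAt.comp_hasDerivAt s hline).congr_deriv
        (InnerProductSpace.toDual_apply_apply ..)
    refine ((hh.sub ((hasDerivAt_id s).mul_const (inner ℝ (g x) v))).sub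
      (((hasDerivAt_pow 2 s).const_mul (L / 2)).mul_const (‖v‖ ^ 2))).congr_deriv ?_
    push_cast
    ring
  have hφ' : ∀ s ∈ interior (Ici (0 : ℝ)),
      inner ℝ (g (x + s • v)) v - inner ℝ (g x) v - L * s * ‖v‖ ^ 2 ≤ 0 := by
    intro s hs
    rw [interior_Ici, mem_Ioi] at hs
    calc inner ℝ (g (x + s • v)) v - inner ℝ (g x) v - L * s * ‖v‖ ^ 2
        = inner ℝ (g (x + s • v) - g x) v - L * s * ‖v‖ ^ 2 := by rw [inner_sub_left]
      _ ≤ L * ‖(x + s • v) - x‖ * ‖v‖ - L * s * ‖v‖ ^ 2 := by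
        gcongr
        exact (real_inner_le_norm _ _).trans (by gcongr; exact hLip _ _)
      _ = 0 := by
        rw [add_sub_cancel_left, norm_smul, Real.norm_of_nonneg hs.le]; ring
  have hanti : AntitoneOn φ (Ici 0) :=
    antitoneOn_of_hasDerivWithinAt_nonpos (convex_Ici 0)
      (fun s _ ↦ (hφ s).continuousAt.continuousWithinAt)
      (fun s _ ↦ (hφ s).hasDerivWithinAt) hφ'
  have hφ01 : φ 1 ≤ φ 0 := hanti self_mem_Ici (mem_Ici.2 zero_le_one) zero_le_one
  simp only [φ, v, zero_smul, add_zero, one_smul, add_sub_cancel] at hφ01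
  linarith

end Descent

theorem stmt_17_general {n : ℕ} (h f : EuclideanSpace ℝ (Fin n) → ℝ)
    (gradh : EuclideanSpace ℝ (Fin n) → EuclideanSpace ℝ (Fin n))
    (hgrad : ∀ x, HasGradientAt h (gradh x) x)
    (L : ℝ) (hL : 0 < L) (hLip : ∀ x y, ‖gradh x - gradh y‖ ≤ L * ‖x - y‖)
    (hf : ConvexOn ℝ Set.univ f)
    (Lf : ℝ) (hLf : 0 < Lf) (hfLip : ∀ x y, |f x - f y| ≤ Lf * ‖x - y‖)
    (t : ℝ)
    (M₁ M₂ Gb : ℝ)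
    (X D : EuclideanSpace ℝ (Fin n))
    (hGb : ‖gradh X‖ ≤ Gb)
    (hD : (inner ℝ (gradh X) D : ℝ) + 1 / t * ‖D‖ ^ 2 + f (X + D) - f X ≤ 0)
    (α : ℝ) (hα : α ∈ Set.Ioc (0 : ℝ) 1)
    (R : EuclideanSpace ℝ (Fin n) → EuclideanSpace ℝ (Fin n))
    (hR1 : ‖R (α • D) - X‖ ≤ M₁ * ‖α • D‖)
    (hR2 : ‖R (α • D) - (X + α • D)‖ ≤ M₂ * ‖α • D‖ ^ 2) :
    h (R (α • D)) + f (R (α • D)) - h X - f X ≤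
      ((M₂ * Gb + L * M₁ ^ 2 / 2 + Lf * M₂) * α ^ 2 - α / t) * ‖D‖ ^ 2 := by
  obtain ⟨hα₀, hα₁⟩ := hα
  set Y := R (α • D)
  have hαD : ‖α • D‖ = α * ‖D‖ := by rw [norm_smul, Real.norm_of_nonneg hα₀.le]
  rw [hαD] at hR1 hR2
  have hinner : inner ℝ (gradh X) (Y - X) ≤
      α * inner ℝ (gradh X) D + Gb * (M₂ * (α * ‖D‖) ^ 2) :=
    calc inner ℝ (gradh X) (Y - X)
        = inner ℝ (gradh X) (α • D) + inner ℝ (gradh X) (Y - (X + α • D)) := by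
          rw [← inner_add_right]; congr 1; abel
      _ ≤ α * inner ℝ (gradh X) D + ‖gradh X‖ * ‖Y - (X + α • D)‖ := by
          rw [real_inner_smul_right]; gcongr; exact real_inner_le_norm _ _
      _ ≤ α * inner ℝ (gradh X) D + Gb * (M₂ * (α * ‖D‖) ^ 2) := by
          gcongr; exact (norm_nonneg _).trans hGb
  have hsmooth : h Y - h X ≤
      α * inner ℝ (gradh X) D + (M₂ * Gb + L * M₁ ^ 2 / 2) * (α * ‖D‖) ^ 2 := by
    have hdesc := le_add_inner_add_of_lipschitz_gradient hgrad hLip X Y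
    have hstep : L / 2 * ‖Y - X‖ ^ 2 ≤ L / 2 * (M₁ * (α * ‖D‖)) ^ 2 := by gcongr
    linarith
  have hnonsmooth : f Y - f X ≤ α * (f (X + D) - f X) + Lf * M₂ * (α * ‖D‖) ^ 2 := by
    have hconv := hf.apply_add_smul_sub_le (mem_univ X) (mem_univ (X + D)) hα₀.le hα₁
    have hlip : f Y - f (X + α • D) ≤ Lf * (M₂ * (α * ‖D‖) ^ 2) :=
      (le_abs_self _).trans ((hfLip _ _).trans (by gcongr))
    linarith
  have hDα := mul_nonpos_of_nonneg_of_nonpos hα₀.le hD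
  linear_combination hsmooth + hnonsmooth + hDα

theorem stmt_17 {n : ℕ} (h f : EuclideanSpace ℝ (Fin n) → ℝ)
    (gradh : EuclideanSpace ℝ (Fin n) → EuclideanSpace ℝ (Fin n))
    (hgrad : ∀ x, HasGradientAt h (gradh x) x)
    (L : ℝ) (hL : 0 < L) (hLip : ∀ x y, ‖gradh x - gradh y‖ ≤ L * ‖x - y‖)
    (hf : ConvexOn ℝ Set.univ f)
    (Lf : ℝ) (hLf : 0 < Lf) (hfLip : ∀ x y, |f x - f y| ≤ Lf * ‖x - y‖)
    (t : ℝ) (ht : 0 < t)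
    (M₁ M₂ Gb : ℝ) (hM₁ : 0 < M₁) (hM₂ : 0 < M₂)
    (X D : EuclideanSpace ℝ (Fin n))
    (hGb : ‖gradh X‖ ≤ Gb)
    (hD : (inner ℝ (gradh X) D : ℝ) + 1 / t * ‖D‖ ^ 2 + f (X + D) - f X ≤ 0)
    (α : ℝ) (hα : α ∈ Set.Ioc (0 : ℝ) 1)
    (R : EuclideanSpace ℝ (Fin n) → EuclideanSpace ℝ (Fin n))
    (hR1 : ‖R (α • D) - X‖ ≤ M₁ * ‖α • D‖)
    (hR2 : ‖R (α • D) - (X + α • D)‖ ≤ M₂ * ‖α • D‖ ^ 2) :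
    h (R (α • D)) + f (R (α • D)) - h X - f X ≤
      ((M₂ * Gb + L * M₁ ^ 2 / 2 + Lf * M₂) * α ^ 2 - α / t) * ‖D‖ ^ 2 :=
  stmt_17_general h f gradh hgrad L hL hLip hf Lf hLf hfLip t M₁ M₂ Gb X D hGb hD α hα R hR1 hR2
end
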